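/- Let T be a linear relation in a Krein space H with canonical decomposition H = H⁻[⊕]H⁺ such that H⁻ ⊆ D_{T^c}, and let λ ∈ ℂ with λ ∉ σ_p(P⁺T|H⁺), where P⁺T|H⁺ = {(x, P⁺y) : x ∈ H⁺, (x,y) ∈ T} is a linear relation in H⁺. Then the relation T⁻(λ) = {(P⁻x, P⁻y) : (x,y) ∈ T, y − λx ∈ H⁻} in H⁻ is an operator (its multivalued part is trivial). -/

import Mathlib

open Complex

noncomputable section

variable {H : Type*} [NormedAddCommGroup H] [InnerProductSpace ℂ H] [CompleteSpace H]

/-- Indefinite inner product `[x,y] = ⟪x, J y⟫`. -/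
def kip (J : H →L[ℂ] H) (x y : H) : ℂ := inner ℂ x (J y)

/-- `H⁻ = ker (J + id)`. -/
def negSet (J : H →L[ℂ] H) : Set H := {x | J x = -x}

/-- `H⁺ = ker (J - id)`. -/
def posSet (J : H →L[ℂ] H) : Set H := {x | J x = x}

/-- The canonical projection `P⁻ = (id - J)/2` onto `H⁻`. -/
def Pm (J : H →L[ℂ] H) (x : H) : H := (2⁻¹ : ℂ) • (x - J x)

/-- The canonical projection `P⁺ = (id + J)/2` onto `H⁺`. -/
def Pp (J : H →L[ℂ] H) (x : H) : H := (2⁻¹ : ℂ) • (x + J x)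

/-- `J` is a fundamental symmetry: self-adjoint and an involution. -/
structure IsFundSym (J : H →L[ℂ] H) : Prop where
  symm : ∀ x y : H, (inner ℂ (J x) y : ℂ) = inner ℂ x (J y)
  invol : ∀ x : H, J (J x) = x

def domSet (A : Set (H × H)) : Set H := {x | ∃ y, (x, y) ∈ A}
def ranSet (A : Set (H × H)) : Set H := {y | ∃ x, (x, y) ∈ A}
def mulSet (A : Set (H × H)) : Set H := {y | ((0 : H), y) ∈ A}
def kerl (A : Set (H × H)) (l : ℂ) : Set H := {x | (x, l • x) ∈ A}
def pointSpec (A : Set (H × H)) : Set ℂ := {l | ∃ x : H, x ≠ 0 ∧ (x, l • x) ∈ A}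
/-- The relation `A - l·I`. -/
def shiftRel (A : Set (H × H)) (l : ℂ) : Set (H × H) := {p | ∃ q ∈ A, p = (q.1, q.2 - l • q.1)}
def invRel (A : Set (H × H)) : Set (H × H) := {p | (p.2, p.1) ∈ A}
/-- Composition `A ∘ B` (apply `B` first). -/
def relComp (A B : Set (H × H)) : Set (H × H) := {p | ∃ y, (p.1, y) ∈ B ∧ (y, p.2) ∈ A}
def imageRel (A : Set (H × H)) (M : Set H) : Set H := {y | ∃ x ∈ M, (x, y) ∈ A}
def setSum (A B : Set H) : Set H := {z | ∃ a ∈ A, ∃ b ∈ B, z = a + b}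
/-- The relation `JT = {(x, Jy) : (x,y) ∈ T}`. -/
def JRel (J : H →L[ℂ] H) (A : Set (H × H)) : Set (H × H) := {p | ∃ q ∈ A, p = (q.1, J q.2)}
/-- Krein-space adjoint `T^c`. -/
def adjRel (J : H →L[ℂ] H) (T : Set (H × H)) : Set (H × H) :=
  {q | ∀ p ∈ T, kip J q.2 p.1 = kip J q.1 p.2}
def IsSymRel (J : H →L[ℂ] H) (T : Set (H × H)) : Prop := T ⊆ adjRel J T
def IsDissipative (J : H →L[ℂ] H) (T : Set (H × H)) : Prop := ∀ p ∈ T, 0 ≤ (kip J p.1 p.2).im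
/-- The operator part `T_s = {(x,y) ∈ T : y ⟂ Ind T}`. -/
def opPart (T : Set (H × H)) : Set (H × H) :=
  {p | p ∈ T ∧ ∀ z ∈ mulSet T, (inner ℂ p.2 z : ℂ) = 0}
/-- `‖T_s P⁻‖`: norm of `x ↦ T_s x` as an operator on `H⁻`. -/
def normTsPm (J : H →L[ℂ] H) (T : Set (H × H)) : ℝ :=
  sSup {r | ∃ p ∈ opPart T, p.1 ∈ negSet J ∧ ‖p.1‖ ≤ 1 ∧ r = ‖p.2‖}
/-- `‖P⁻ T_s P⁻‖`: norm of `x ↦ P⁻(T_s x)` as an operator on `H⁻`. -/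
def normPmTsPm (J : H →L[ℂ] H) (T : Set (H × H)) : ℝ :=
  sSup {r | ∃ p ∈ opPart T, p.1 ∈ negSet J ∧ ‖p.1‖ ≤ 1 ∧ r = ‖Pm J p.2‖}
/-- The region `Γ` determined by `m = ‖T_s P⁻‖`, `c = ‖P⁻T_s P⁻‖`. -/
def GammaSet (m c : ℝ) : Set ℂ :=
  {l | l.im ≠ 0 ∧ m < |l.im| ∧
    ‖(if 0 ≤ l.re then (1 : ℂ) else -1) + (c : ℂ) / l‖ < 2 / (1 + (m / |l.im|) ^ 2)}
/-- `C = (ℂ∖ℝ) ∖ Γ`. -/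
def CSet (m c : ℝ) : Set ℂ := {l : ℂ | l.im ≠ 0} \ GammaSet m c

/-- The relation `T⁻(λ) = {(P⁻x, P⁻y) : (x,y) ∈ T, y − λx ∈ H⁻}` in `H⁻`. -/
def TminusRel (J : H →L[ℂ] H) (T : Set (H × H)) (l : ℂ) : Set (H × H) :=
  {p | ∃ q ∈ T, q.2 - l • q.1 ∈ negSet J ∧ p = (Pm J q.1, Pm J q.2)}

/-!
If `(x, z) ∈ T` with `P⁻x = 0` and `z - λx ∈ H⁻`, then `x ∈ H⁺` and `P⁺z = λx`, so `x` is a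
`λ`-eigenvector of `P⁺T|H⁺` unless `x = 0`. Hence `z ∈ Ind T ∩ H⁻`; since `Ind T` is
`[·,·]`-orthogonal to `D_{T^c} ⊇ H⁻`, we get `[z, z] = -‖z‖² = 0`.
-/

section

variable {E : Type*} [NormedAddCommGroup E] [InnerProductSpace ℂ E] {J : E →L[ℂ] E}

theorem Pm_eq_zero_iff {x : E} : Pm J x = 0 ↔ x ∈ posSet J := by
  rw [Pm, smul_eq_zero_iff_right (by norm_num), sub_eq_zero, posSet, Set.mem_setOf_eq, eq_comm]

theorem Pp_eq_self_of_mem_posSet {x : E} (hx : x ∈ posSet J) : Pp J x = x := by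
  rw [Pp, hx]
  module

theorem Pp_eq_zero_of_mem_negSet {x : E} (hx : x ∈ negSet J) : Pp J x = 0 := by
  simp [Pp, hx.out]

theorem Pp_sub_smul (x y : E) (l : ℂ) : Pp J (y - l • x) = Pp J y - l • Pp J x := by
  simp only [Pp, map_sub, map_smul]
  module

theorem Pp_eq_smul_of_sub_smul_mem_negSet {x y : E} {l : ℂ} (hx : x ∈ posSet J)
    (h : y - l • x ∈ negSet J) : Pp J y = l • x := by
  have := Pp_eq_zero_of_mem_negSet h
  rwa [Pp_sub_smul, Pp_eq_self_of_mem_posSet hx, sub_eq_zero] at this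

theorem kip_eq_zero_of_mem_domSet_adjRel {T : Set (E × E)} {u y : E}
    (hu : u ∈ domSet (adjRel J T)) (hy : y ∈ mulSet T) : kip J u y = 0 := by
  obtain ⟨v, hv⟩ := hu
  simpa [kip] using (hv (0, y) hy).symm

theorem eq_zero_of_mem_negSet_of_kip_self_eq_zero {y : E} (hy : y ∈ negSet J)
    (h : kip J y y = 0) : y = 0 := by
  rw [kip, hy.out, inner_neg_right, neg_eq_zero] at h
  exact inner_self_eq_zero.mp h

end

theorem statement7_general (J : H →L[ℂ] H)
    (T : Submodule ℂ (H × H))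
    (hdom : negSet J ⊆ domSet (adjRel J (T : Set (H × H))))
    (l : ℂ)
    (hl : l ∉ pointSpec
      {p : H × H | p.1 ∈ posSet J ∧ ∃ y, (p.1, y) ∈ T ∧ p.2 = Pp J y}) :
    ∀ y : H, ((0 : H), y) ∈ TminusRel J (T : Set (H × H)) l → y = 0 := by
  rintro y ⟨⟨x, z⟩, hT, hneg, hxy⟩
  obtain ⟨hx, rfl⟩ := Prod.mk.inj hxy
  have hxpos : x ∈ posSet J := Pm_eq_zero_iff.mp hx.symm
  obtain rfl : x = 0 := by
    by_contra hne
    exact hl ⟨x, hne, hxpos, z, hT, (Pp_eq_smul_of_sub_smul_mem_negSet hxpos hneg).symm⟩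
  rw [smul_zero, sub_zero] at hneg
  have hz : z = 0 := eq_zero_of_mem_negSet_of_kip_self_eq_zero hneg
    (kip_eq_zero_of_mem_domSet_adjRel (hdom hneg) hT)
  rw [hz, Pm_eq_zero_iff]
  exact map_zero J

/-- Lemma 2.7 a): if `H⁻ ⊆ D_{T^c}` and `λ ∉ σ_p(P⁺T|H⁺)` then `T⁻(λ)` is an operator. -/
theorem statement7 (J : H →L[ℂ] H) (hJ : IsFundSym J)
    (T : Submodule ℂ (H × H))
    (hdom : negSet J ⊆ domSet (adjRel J (T : Set (H × H))))
    (l : ℂ)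
    (hl : l ∉ pointSpec
      {p : H × H | p.1 ∈ posSet J ∧ ∃ y, (p.1, y) ∈ T ∧ p.2 = Pp J y}) :
    ∀ y : H, ((0 : H), y) ∈ TminusRel J (T : Set (H × H)) l → y = 0 :=
  statement7_general J T hdom l hl
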